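/- arXiv:2309.00065 — 4 statements merged into one kernel-verified Lean document; each statement's English description precedes it below -/
import Mathlib

section
/- Let λ > 0, 0 < c̄ < c_B, and α ∈ (0,1). Then there exists a unique R₁ > 0 such that cosh(√λ(1−α)·R₁)/cosh(√λ · R₁) = c̄/c_B. -/
/-! For `0 ≤ a < b` the ratio `cosh (a R) / cosh (b R)` equals `1` at `R = 0`, is continuous and
strictly decreasing on `[0, ∞)`, and tends to `0` (it is at most `2 exp ((a - b) R)`). Since
`√λ (1 - α) < √λ` and `c̄ / c_B ∈ (0, 1)`, the intermediate value theorem gives a radius `R₁ > 0`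
and strict monotonicity makes it unique. -/

open Real Set Filter Topology

lemma exists_unique_gt_eq_of_strictAntiOn_Ici {f : ℝ → ℝ} {a l t : ℝ}
    (hcont : ContinuousOn f (Ici a)) (hanti : StrictAntiOn f (Ici a))
    (hlim : Tendsto f atTop (𝓝 l)) (ht : t ∈ Ioo l (f a)) :
    ∃! R, a < R ∧ f R = t := by
  obtain ⟨M, hM⟩ := (hlim.eventually (gt_mem_nhds ht.1)).exists_forall_of_atTop
  have hM' : a ≤ max M a := le_max_right M a
  obtain ⟨R, hR, hfR⟩ := intermediate_value_Ioo' hM' (hcont.mono Icc_subset_Ici_self)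
    ⟨hM _ (le_max_left M a), ht.2⟩
  refine ⟨R, ⟨hR.1, hfR⟩, fun S ⟨hS, hfS⟩ => ?_⟩
  exact hanti.injOn (le_of_lt hS) (le_of_lt hR.1) (hfS.trans hfR.symm)

section CoshRatio

variable {a b : ℝ}

lemma continuous_cosh_mul_div_cosh_mul (a b : ℝ) :
    Continuous fun R : ℝ => cosh (a * R) / cosh (b * R) :=
  Continuous.div (by fun_prop) (by fun_prop) fun _ => (cosh_pos _).ne'

/-- Uses `2 cosh x cosh y = cosh (x + y) + cosh (x - y)` on both sides. -/
lemma cosh_mul_mul_cosh_mul_lt (ha : 0 ≤ a) (hab : a < b) {R S : ℝ} (hR : 0 ≤ R)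
    (hRS : R < S) : cosh (a * S) * cosh (b * R) < cosh (a * R) * cosh (b * S) := by
  have hsum : cosh (a * S + b * R) < cosh (a * R + b * S) := by
    rw [cosh_lt_cosh, abs_of_nonneg (by nlinarith), abs_of_nonneg (by nlinarith)]
    nlinarith
  have hdiff : cosh (a * S - b * R) ≤ cosh (a * R - b * S) := by
    rw [cosh_le_cosh, abs_of_nonpos (a := a * R - b * S) (by nlinarith), abs_le]
    constructor <;> nlinarith
  rw [cosh_add, cosh_add] at hsum
  rw [cosh_sub, cosh_sub] at hdiff
  linarith

lemma strictAntiOn_cosh_mul_div_cosh_mul (ha : 0 ≤ a) (hab : a < b) :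
    StrictAntiOn (fun R : ℝ => cosh (a * R) / cosh (b * R)) (Ici 0) := by
  intro R hR S _ hRS
  rw [div_lt_div_iff₀ (cosh_pos _) (cosh_pos _)]
  exact cosh_mul_mul_cosh_mul_lt ha hab hR hRS

lemma cosh_mul_div_cosh_mul_le (ha : 0 ≤ a) {R : ℝ} (hR : 0 ≤ R) :
    cosh (a * R) / cosh (b * R) ≤ 2 * exp ((a - b) * R) := by
  have hnum : cosh (a * R) ≤ exp (a * R) := by
    rw [cosh_eq]
    linarith [exp_le_exp.2 (show -(a * R) ≤ a * R by nlinarith)]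
  have hden : exp (b * R) / 2 ≤ cosh (b * R) := by
    rw [cosh_eq]
    linarith [exp_pos (-(b * R))]
  calc cosh (a * R) / cosh (b * R) ≤ exp (a * R) / (exp (b * R) / 2) :=
        div_le_div₀ (exp_pos _).le hnum (by positivity) hden
    _ = 2 * exp ((a - b) * R) := by
        rw [sub_mul, exp_sub]
        field_simp

lemma tendsto_cosh_mul_div_cosh_mul_atTop (ha : 0 ≤ a) (hab : a < b) :
    Tendsto (fun R : ℝ => cosh (a * R) / cosh (b * R)) atTop (𝓝 0) := by
  have hexp : Tendsto (fun R : ℝ => 2 * exp ((a - b) * R)) atTop (𝓝 0) := by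
    simpa using (tendsto_exp_atBot.comp
      (tendsto_id.const_mul_atTop_of_neg (sub_neg.2 hab))).const_mul 2
  refine tendsto_of_tendsto_of_tendsto_of_le_of_le' tendsto_const_nhds hexp ?_ ?_
  · exact Eventually.of_forall fun R => div_nonneg (cosh_pos _).le (cosh_pos _).le
  · filter_upwards [eventually_ge_atTop 0] with R hR
    exact cosh_mul_div_cosh_mul_le ha hR

end CoshRatio

/-- Existence and uniqueness of the second critical radius `R₁ > 0` with
`cosh (√λ (1-α) R₁) / cosh (√λ R₁) = c̄ / c_B`, for `λ > 0`, `0 < c̄ < c_B`, `α ∈ (0,1)`. -/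
theorem stmt_4 (lam cbar cB alpha : ℝ) (hlam : 0 < lam) (hcbar : 0 < cbar) (hc : cbar < cB)
    (halpha : alpha ∈ Set.Ioo (0 : ℝ) 1) :
    ∃! R₁ : ℝ, 0 < R₁ ∧
      Real.cosh (Real.sqrt lam * (1 - alpha) * R₁) / Real.cosh (Real.sqrt lam * R₁)
        = cbar / cB := by
  obtain ⟨hα0, hα1⟩ := halpha
  have hb : 0 < √lam := sqrt_pos.2 hlam
  have ha : 0 ≤ √lam * (1 - alpha) := mul_nonneg hb.le (by linarith)
  have hab : √lam * (1 - alpha) < √lam := by nlinarith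
  have ht : cbar / cB ∈ Ioo 0 (cosh (√lam * (1 - alpha) * 0) / cosh (√lam * 0)) := by
    simpa using ⟨div_pos hcbar (hcbar.trans hc), (div_lt_one (hcbar.trans hc)).2 hc⟩
  exact exists_unique_gt_eq_of_strictAntiOn_Ici
    (continuous_cosh_mul_div_cosh_mul _ _).continuousOn
    (strictAntiOn_cosh_mul_div_cosh_mul ha hab) (tendsto_cosh_mul_div_cosh_mul_atTop ha hab) ht
end

section
/- For every β ≥ 0, the equation F(R̄, β) = 0 has a unique root R̄ in (0, +∞). -/
/-- The transcendental function `F(R̄, β)` from the necrotic-core system. -/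
noncomputable def Fnec (lam cbar cB alpha Rbar beta : ℝ) : ℝ :=
  cbar / cB * (Real.cosh (Real.sqrt lam * Rbar) + beta * Real.sinh (Real.sqrt lam * Rbar)) -
    (Real.cosh (Real.sqrt lam * (1 - alpha) * Rbar) +
      beta * Real.sinh (Real.sqrt lam * (1 - alpha) * Rbar))

/-!
With `k = √λ`, `s = 1 - α` and `g(x) = cosh x + β sinh x`, a root `R̄ > 0` of `F` is exactly a
point `x = k R̄ > 0` where the ratio `g(s x) / g(x)` equals `c̄ / c_B ∈ (0, 1)`. This ratio is `1`
at `x = 0` and tends to `0`, since `g(x)` grows like `eˣ`; so a root exists by the intermediate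
value theorem. It is unique because the ratio is strictly decreasing, which follows from the
monotonicity of `x g'(x) / g(x)`: the derivative of this function has numerator
`g g' + x (g² - g'²) = g g' + x (1 - β²)`, and `g g' ≥ (1 + β²) sinh x cosh x > x β²` for `x > 0`.
-/

open Real Set

theorem strictAntiOn_comp_mul_div_self {f f' : ℝ → ℝ} {s : ℝ} (hs0 : 0 ≤ s) (hs1 : s < 1)
    (hf : ∀ x, HasDerivAt f (f' x) x) (hpos : ∀ x, 0 ≤ x → 0 < f x)
    (hN : StrictMonoOn (fun x => x * f' x / f x) (Ici 0)) :
    StrictAntiOn (fun x => f (s * x) / f x) (Ici 0) := by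
  have hcomp : ∀ x, HasDerivAt (fun x => f (s * x)) (f' (s * x) * s) x := fun x =>
    (hf (s * x)).comp x ((hasDerivAt_id x).const_mul s |>.congr_deriv (mul_one s))
  apply strictAntiOn_of_deriv_neg (convex_Ici 0)
  · exact ((continuous_iff_continuousAt.2 fun x => (hcomp x).continuousAt).continuousOn.div
      (continuous_iff_continuousAt.2 fun x => (hf x).continuousAt).continuousOn
      fun x hx => (hpos x hx).ne')
  · intro x hx
    rw [interior_Ici, mem_Ioi] at hx
    have hsx : 0 ≤ s * x := mul_nonneg hs0 hx.le
    have ha := hpos (s * x) hsx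
    have hb := hpos x hx.le
    rw [((hcomp x).fun_div (hf x) hb.ne').deriv]
    have hlt : s * x * f' (s * x) / f (s * x) < x * f' x / f x :=
      hN hsx hx.le (mul_lt_of_lt_one_left hx hs1)
    rw [div_lt_div_iff₀ ha hb] at hlt
    apply div_neg_of_neg_of_pos _ (pow_pos hb 2)
    nlinarith

noncomputable def coshAddMulSinh (β x : ℝ) : ℝ := cosh x + β * sinh x

noncomputable def sinhAddMulCosh (β x : ℝ) : ℝ := sinh x + β * cosh x

section Hyperbolic

variable {β s x : ℝ}

theorem hasDerivAt_coshAddMulSinh (β x : ℝ) :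
    HasDerivAt (coshAddMulSinh β) (sinhAddMulCosh β x) x :=
  (hasDerivAt_cosh x).add ((hasDerivAt_sinh x).const_mul β)

theorem hasDerivAt_sinhAddMulCosh (β x : ℝ) :
    HasDerivAt (sinhAddMulCosh β) (coshAddMulSinh β x) x :=
  (hasDerivAt_sinh x).add ((hasDerivAt_cosh x).const_mul β)

theorem continuous_coshAddMulSinh (β : ℝ) : Continuous (coshAddMulSinh β) :=
  continuous_iff_continuousAt.2 fun x => (hasDerivAt_coshAddMulSinh β x).continuousAt

theorem continuous_sinhAddMulCosh (β : ℝ) : Continuous (sinhAddMulCosh β) :=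
  continuous_iff_continuousAt.2 fun x => (hasDerivAt_sinhAddMulCosh β x).continuousAt

theorem exp_div_two_le_coshAddMulSinh (hβ : 0 ≤ β) (hx : 0 ≤ x) :
    exp x / 2 ≤ coshAddMulSinh β x := by
  have := mul_nonneg hβ (sinh_nonneg_iff.2 hx)
  rw [coshAddMulSinh, cosh_eq]
  linarith [exp_pos (-x)]

theorem coshAddMulSinh_pos (hβ : 0 ≤ β) (hx : 0 ≤ x) : 0 < coshAddMulSinh β x :=
  (div_pos (exp_pos x) two_pos).trans_le (exp_div_two_le_coshAddMulSinh hβ hx)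

theorem coshAddMulSinh_le (hβ : 0 ≤ β) (hx : 0 ≤ x) :
    coshAddMulSinh β x ≤ (1 + β) * exp x := by
  have hs := sinh_nonneg_iff.2 hx
  have hc := cosh_pos x
  have := mul_le_mul_of_nonneg_left (show sinh x ≤ exp x by linarith [cosh_add_sinh x]) hβ
  rw [coshAddMulSinh]
  linarith [cosh_add_sinh x]

theorem coshAddMulSinh_sq_sub_sinhAddMulCosh_sq (β x : ℝ) :
    coshAddMulSinh β x ^ 2 - sinhAddMulCosh β x ^ 2 = 1 - β ^ 2 := by
  rw [coshAddMulSinh, sinhAddMulCosh]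
  linear_combination (1 - β ^ 2) * cosh_sq_sub_sinh_sq x

theorem mul_sq_sub_one_lt_coshAddMulSinh_mul_sinhAddMulCosh (hβ : 0 ≤ β) (hx : 0 < x) :
    x * (β ^ 2 - 1) < coshAddMulSinh β x * sinhAddMulCosh β x := by
  have hxs : x ≤ sinh x := self_le_sinh_iff.2 hx.le
  have hxsc : x ≤ sinh x * cosh x := by nlinarith [one_le_cosh x]
  have hexpand : coshAddMulSinh β x * sinhAddMulCosh β x =
      (1 + β ^ 2) * (sinh x * cosh x) + β * (cosh x ^ 2 + sinh x ^ 2) := by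
    rw [coshAddMulSinh, sinhAddMulCosh]; ring
  rw [hexpand]
  nlinarith [mul_le_mul_of_nonneg_left hxsc (sq_nonneg β),
    mul_nonneg hβ (add_nonneg (sq_nonneg (cosh x)) (sq_nonneg (sinh x)))]

theorem strictMonoOn_mul_sinhAddMulCosh_div_coshAddMulSinh (hβ : 0 ≤ β) :
    StrictMonoOn (fun x => x * sinhAddMulCosh β x / coshAddMulSinh β x) (Ici 0) := by
  apply strictMonoOn_of_deriv_pos (convex_Ici 0)
  · exact (continuous_id.mul (continuous_sinhAddMulCosh β)).continuousOn.div
      (continuous_coshAddMulSinh β).continuousOn fun x hx => (coshAddMulSinh_pos hβ hx).ne'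
  · intro x hx
    rw [interior_Ici, mem_Ioi] at hx
    have hg := coshAddMulSinh_pos hβ hx.le
    have hnum : HasDerivAt (fun x => x * sinhAddMulCosh β x)
        (1 * sinhAddMulCosh β x + x * coshAddMulSinh β x) x :=
      (hasDerivAt_id x).mul (hasDerivAt_sinhAddMulCosh β x)
    rw [(hnum.fun_div (hasDerivAt_coshAddMulSinh β x) hg.ne').deriv]
    apply div_pos _ (pow_pos hg 2)
    have hexpand : (1 * sinhAddMulCosh β x + x * coshAddMulSinh β x) * coshAddMulSinh β x -
          x * sinhAddMulCosh β x * sinhAddMulCosh β x =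
        coshAddMulSinh β x * sinhAddMulCosh β x + x * (1 - β ^ 2) := by
      linear_combination x * coshAddMulSinh_sq_sub_sinhAddMulCosh_sq β x
    rw [hexpand]
    linarith [mul_sq_sub_one_lt_coshAddMulSinh_mul_sinhAddMulCosh hβ hx]

theorem exists_coshAddMulSinh_comp_mul_div_lt (hβ : 0 ≤ β) (hs0 : 0 ≤ s) (hs1 : s < 1)
    {r : ℝ} (hr : 0 < r) :
    ∃ x, 0 < x ∧ coshAddMulSinh β (s * x) / coshAddMulSinh β x < r := by
  set C := 2 * (1 + β) / r with hC
  have hCpos : 0 < C := by positivity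
  have hrC : r * C = 2 * (1 + β) := by rw [hC]; field_simp
  have hs : 0 < 1 - s := sub_pos.2 hs1
  set x := C / (1 - s) with hx_def
  have hx : 0 < x := div_pos hCpos hs
  refine ⟨x, hx, ?_⟩
  have hsx : 0 ≤ s * x := mul_nonneg hs0 hx.le
  have hsplit : exp x = exp (s * x) * exp C := by
    rw [← exp_add, hx_def]; congr 1; field_simp; ring
  rw [div_lt_iff₀ (coshAddMulSinh_pos hβ hx.le)]
  calc coshAddMulSinh β (s * x) ≤ (1 + β) * exp (s * x) := coshAddMulSinh_le hβ hsx
    _ = r * (exp (s * x) * C / 2) := by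
        linear_combination (-exp (s * x) / 2) * hrC
    _ < r * (exp x / 2) := by
        rw [hsplit]
        gcongr
        linarith [add_one_le_exp C]
    _ ≤ r * coshAddMulSinh β x := by gcongr; exact exp_div_two_le_coshAddMulSinh hβ hx.le

theorem existsUnique_coshAddMulSinh_comp_mul_div_eq (hβ : 0 ≤ β) (hs0 : 0 ≤ s) (hs1 : s < 1)
    {r : ℝ} (hr0 : 0 < r) (hr1 : r < 1) :
    ∃! x, 0 < x ∧ coshAddMulSinh β (s * x) / coshAddMulSinh β x = r := by
  have hanti := strictAntiOn_comp_mul_div_self hs0 hs1 (hasDerivAt_coshAddMulSinh β)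
    (fun _ => coshAddMulSinh_pos hβ) (strictMonoOn_mul_sinhAddMulCosh_div_coshAddMulSinh hβ)
  obtain ⟨x₀, hx₀, hlt⟩ := exists_coshAddMulSinh_comp_mul_div_lt hβ hs0 hs1 hr0
  have hcont : ContinuousOn (fun x => coshAddMulSinh β (s * x) / coshAddMulSinh β x)
      (Icc 0 x₀) :=
    ((continuous_coshAddMulSinh β).comp (continuous_const.mul continuous_id)).continuousOn.div
      (continuous_coshAddMulSinh β).continuousOn fun x hx => (coshAddMulSinh_pos hβ hx.1).ne'
  have hat0 : coshAddMulSinh β (s * 0) / coshAddMulSinh β 0 = 1 := by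
    simp [coshAddMulSinh]
  obtain ⟨x, hx, hxr⟩ := intermediate_value_Ioo' hx₀.le hcont ⟨hlt, hat0 ▸ hr1⟩
  refine ⟨x, ⟨hx.1, hxr⟩, fun y hy => hanti.injOn hy.1.le hx.1.le ?_⟩
  exact hy.2.trans hxr.symm

end Hyperbolic

theorem fnec_eq (lam cbar cB alpha R beta : ℝ) :
    Fnec lam cbar cB alpha R beta = cbar / cB * coshAddMulSinh beta (√lam * R) -
      coshAddMulSinh beta ((1 - alpha) * (√lam * R)) := by
  simp only [Fnec, coshAddMulSinh]
  ring_nf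

theorem fnec_eq_zero_iff {lam cbar cB alpha R beta : ℝ} (hbeta : 0 ≤ beta) (hR : 0 ≤ R) :
    Fnec lam cbar cB alpha R beta = 0 ↔
      coshAddMulSinh beta ((1 - alpha) * (√lam * R)) / coshAddMulSinh beta (√lam * R) =
        cbar / cB := by
  rw [fnec_eq, sub_eq_zero, eq_comm,
    div_eq_iff (coshAddMulSinh_pos hbeta (mul_nonneg (sqrt_nonneg lam) hR)).ne']

/-- For every fixed `β ≥ 0`, the equation `F(R̄, β) = 0` has a unique root `R̄ ∈ (0, ∞)`. -/
theorem stmt_6 (lam cbar cB alpha : ℝ) (hlam : 0 < lam) (hcbar : 0 < cbar) (hc : cbar < cB)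
    (halpha : alpha ∈ Set.Ioo (0 : ℝ) 1) (beta : ℝ) (hbeta : 0 ≤ beta) :
    ∃! Rbar : ℝ, 0 < Rbar ∧ Fnec lam cbar cB alpha Rbar beta = 0 := by
  obtain ⟨ha0, ha1⟩ := halpha
  have hk : 0 < √lam := sqrt_pos.2 hlam
  have hcB : 0 < cB := hcbar.trans hc
  obtain ⟨x, ⟨hx, hxr⟩, hxuniq⟩ := existsUnique_coshAddMulSinh_comp_mul_div_eq hbeta
    (s := 1 - alpha) (by linarith) (by linarith) (div_pos hcbar hcB) ((div_lt_one hcB).2 hc)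
  refine ⟨x / √lam, ⟨div_pos hx hk, ?_⟩, ?_⟩
  · rwa [fnec_eq_zero_iff hbeta (div_pos hx hk).le, mul_div_cancel₀ _ hk.ne']
  · rintro R ⟨hR, hFR⟩
    rw [fnec_eq_zero_iff hbeta hR.le] at hFR
    rw [← hxuniq _ ⟨mul_pos hk hR, hFR⟩, mul_div_cancel_left₀ _ hk.ne']
end

section
/- Let λ > 0, 0 < c̄ < c_B, α ∈ (0,1), n_c ∈ (0,1), and R > 0. The nonlinear system F(R̄, β) = 0, β = √n_c · tanh(√λ · r), r + R̄ = R has a solution (r, R̄, β) with 0 < r < R if and only if R > R₁, where R₁ > 0 is the unique positive solution of cosh(√λ(1−α)·R₁)/cosh(√λ·R₁) = c̄/c_B. Moreover, when R > R₁ this solution is unique. -/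
open Real Set

namespace Real

theorem hasDerivAt_tanh (x : ℝ) : HasDerivAt tanh (1 - tanh x ^ 2) x := by
  have h := (hasDerivAt_sinh x).div (hasDerivAt_cosh x) (cosh_pos x).ne'
  rw [show sinh / cosh = tanh from funext fun y => (tanh_eq_sinh_div_cosh y).symm] at h
  refine h.congr_deriv ?_
  rw [tanh_eq_sinh_div_cosh]
  field_simp

theorem tanh_nonneg {x : ℝ} (hx : 0 ≤ x) : 0 ≤ tanh x := by
  rw [tanh_eq_sinh_div_cosh]
  exact div_nonneg (sinh_nonneg_iff.2 hx) (cosh_pos x).le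

end Real

theorem strictAntiOn_cosh_mul_div_cosh_mul_s8 {m s : ℝ} (hm : 0 ≤ m) (hms : m < s) :
    StrictAntiOn (fun x => cosh (m * x) / cosh (s * x)) (Ici 0) := by
  intro x (hx : 0 ≤ x) y (hy : 0 ≤ y) hxy
  have hs : 0 < s := hm.trans_lt hms
  have two_mul_cosh_mul_cosh : ∀ a b : ℝ, 2 * (cosh a * cosh b) = cosh (a + b) + cosh (b - a) :=
    fun a b => by rw [cosh_add, cosh_sub]; ring
  have hsum : cosh (m * y + s * x) < cosh (m * x + s * y) := by
    rw [cosh_lt_cosh, abs_of_nonneg (by positivity), abs_of_nonneg (by positivity)]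
    nlinarith
  have hdiff : cosh (s * x - m * y) < cosh (s * y - m * x) := by
    rw [cosh_lt_cosh, abs_of_nonneg (a := s * y - m * x) (by nlinarith), abs_lt]
    constructor <;> nlinarith
  rw [div_lt_div_iff₀ (cosh_pos _) (cosh_pos _)]
  linarith [two_mul_cosh_mul_cosh (m * y) (s * x), two_mul_cosh_mul_cosh (m * x) (s * y)]

theorem StrictMonoOn.exists_mem_Ioo_eq_iff {α δ : Type*} [ConditionallyCompleteLinearOrder α]
    [TopologicalSpace α] [OrderTopology α] [DenselyOrdered α] [LinearOrder δ]
    [TopologicalSpace δ] [OrderClosedTopology δ] {f : α → δ} {a b : α} {y : δ}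
    (hmono : StrictMonoOn f (Icc a b)) (hcont : ContinuousOn f (Icc a b)) (hab : a ≤ b) :
    (∃ x ∈ Ioo a b, f x = y) ↔ y ∈ Ioo (f a) (f b) := by
  constructor
  · rintro ⟨x, ⟨hax, hxb⟩, rfl⟩
    exact ⟨hmono (left_mem_Icc.2 hab) ⟨hax.le, hxb.le⟩ hax,
      hmono ⟨hax.le, hxb.le⟩ (right_mem_Icc.2 hab) hxb⟩
  · exact fun hy => intermediate_value_Ioo hab hcont hy

/-- With `a, b, p, q = sinh (m u), cosh (m u), sinh (s u), cosh (s u)`, `u = R - x` and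
`t = tanh (s x)`, this is the numerator of the quotient rule for
`(rimProfile s m c R / rimProfile s s c R)' x`. -/
theorem quotient_numerator_pos {a b p q t c m s : ℝ} (ha : 0 < a) (hb : 0 < b) (hp : 0 < p)
    (hq : 0 < q) (ht : 0 ≤ t) (hc₀ : 0 ≤ c) (hc₁ : c ≤ 1) (hs : 0 ≤ s) (hms : m < s)
    (hcross : q * a < p * b) :
    0 < (-m * a + c * s * (1 - t ^ 2) * a - c * t * m * b) * (q + c * t * p) -
      (b + c * t * a) * (-s * p + c * s * (1 - t ^ 2) * p - c * t * s * q) := by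
  have key : (-m * a + c * s * (1 - t ^ 2) * a - c * t * m * b) * (q + c * t * p) -
      (b + c * t * a) * (-s * p + c * s * (1 - t ^ 2) * p - c * t * s * q) =
      (s - m) * (q * a + c * t * (p * a + q * b) + c ^ 2 * t ^ 2 * (p * b)) +
        s * (p * b - q * a) * ((1 - c) * (1 + c * t ^ 2)) := by
    ring
  have h₁ : 0 < q * a + c * t * (p * a + q * b) + c ^ 2 * t ^ 2 * (p * b) := by positivity
  have h₂ : 0 ≤ (1 - c) * (1 + c * t ^ 2) := mul_nonneg (sub_nonneg.2 hc₁) (by positivity)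
  rw [key]
  exact add_pos_of_pos_of_nonneg (mul_pos (sub_pos.2 hms) h₁)
    (mul_nonneg (mul_nonneg hs (sub_pos.2 hcross).le) h₂)

noncomputable def rimProfile (s m c R r : ℝ) : ℝ :=
  cosh (m * (R - r)) + c * tanh (s * r) * sinh (m * (R - r))

section rimProfile

variable {s m c R : ℝ}

theorem rimProfile_zero : rimProfile s m c R 0 = cosh (m * R) := by
  simp [rimProfile]

theorem rimProfile_self : rimProfile s m c R R = 1 := by
  simp [rimProfile]

theorem rimProfile_pos (hs : 0 ≤ s) (hm : 0 ≤ m) (hc : 0 ≤ c) {r : ℝ} (hr : r ∈ Icc 0 R) :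
    0 < rimProfile s m c R r := by
  have hsr : 0 ≤ s * r := mul_nonneg hs hr.1
  have hmr : 0 ≤ m * (R - r) := mul_nonneg hm (sub_nonneg.2 hr.2)
  have : 0 ≤ c * tanh (s * r) * sinh (m * (R - r)) :=
    mul_nonneg (mul_nonneg hc (tanh_nonneg hsr)) (sinh_nonneg_iff.2 hmr)
  exact add_pos_of_pos_of_nonneg (cosh_pos _) this

theorem hasDerivAt_rimProfile (x : ℝ) :
    HasDerivAt (rimProfile s m c R)
      (-m * sinh (m * (R - x)) + c * s * (1 - tanh (s * x) ^ 2) * sinh (m * (R - x)) -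
        c * tanh (s * x) * m * cosh (m * (R - x))) x := by
  have hu : HasDerivAt (fun r => m * (R - r)) (-m) x := by
    simpa using ((hasDerivAt_id x).const_sub R).const_mul m
  have hsx : HasDerivAt (fun r => s * r) s x := by
    simpa using (hasDerivAt_id x).const_mul s
  have ht : HasDerivAt (fun r => tanh (s * r)) ((1 - tanh (s * x) ^ 2) * s) x :=
    (hasDerivAt_tanh (s * x)).comp x hsx
  exact (hu.cosh.add ((ht.const_mul c).mul hu.sinh)).congr_deriv (by ring)

theorem continuous_rimProfile : Continuous (rimProfile s m c R) :=
  continuous_iff_continuousAt.2 fun x => (hasDerivAt_rimProfile x).continuousAt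

theorem continuousOn_rimProfile_div (hs : 0 ≤ s) (hc : 0 ≤ c) :
    ContinuousOn (rimProfile s m c R / rimProfile s s c R) (Icc 0 R) :=
  continuous_rimProfile.continuousOn.div continuous_rimProfile.continuousOn fun _ hx =>
    (rimProfile_pos hs hs hc hx).ne'

theorem strictMonoOn_rimProfile_div (hm : 0 < m) (hms : m < s) (hc₀ : 0 ≤ c) (hc₁ : c ≤ 1) :
    StrictMonoOn (rimProfile s m c R / rimProfile s s c R) (Icc 0 R) := by
  have hs : 0 < s := hm.trans hms
  refine strictMonoOn_of_deriv_pos (convex_Icc 0 R) (continuousOn_rimProfile_div hs.le hc₀)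
    fun x hx => ?_
  rw [interior_Icc] at hx
  have hD : 0 < rimProfile s s c R x := rimProfile_pos hs.le hs.le hc₀ (Ioo_subset_Icc_self hx)
  have hu : 0 < R - x := sub_pos.2 hx.2
  have hcross : cosh (s * (R - x)) * sinh (m * (R - x)) <
      sinh (s * (R - x)) * cosh (m * (R - x)) := by
    rw [← sub_pos, ← sinh_sub, ← sub_mul, sinh_pos_iff]
    exact mul_pos (sub_pos.2 hms) hu
  rw [((hasDerivAt_rimProfile (s := s) (m := m) (c := c) (R := R) x).div
    (hasDerivAt_rimProfile x) hD.ne').deriv]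
  refine div_pos ?_ (pow_pos hD 2)
  exact quotient_numerator_pos (sinh_pos_iff.2 (by positivity)) (cosh_pos _)
    (sinh_pos_iff.2 (by positivity)) (cosh_pos _) (tanh_nonneg (by nlinarith [hx.1]))
    hc₀ hc₁ hs.le hms hcross

end rimProfile

theorem Fnec_eq_zero_iff {lam cbar cB alpha c R r : ℝ} (hc : 0 ≤ c) (hr : r ∈ Icc 0 R) :
    Fnec lam cbar cB alpha (R - r) (c * tanh (√lam * r)) = 0 ↔
      rimProfile √lam (√lam * (1 - alpha)) c R r / rimProfile √lam √lam c R r = cbar / cB := by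
  have hD := rimProfile_pos (sqrt_nonneg lam) (sqrt_nonneg lam) hc hr
  change cbar / cB * rimProfile √lam √lam c R r -
    rimProfile √lam (√lam * (1 - alpha)) c R r = 0 ↔ _
  rw [sub_eq_zero, eq_comm, div_eq_iff hD.ne']

theorem Fnec_system_iff {lam cbar cB alpha c R r Rbar beta : ℝ} (hc : 0 ≤ c) :
    (0 < r ∧ r < R ∧ Fnec lam cbar cB alpha Rbar beta = 0 ∧ beta = c * tanh (√lam * r) ∧
        r + Rbar = R) ↔
      (r ∈ Ioo 0 R ∧
          (rimProfile √lam (√lam * (1 - alpha)) c R / rimProfile √lam √lam c R) r = cbar / cB) ∧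
        Rbar = R - r ∧ beta = c * tanh (√lam * r) := by
  constructor
  · rintro ⟨hr₀, hrR, hF, rfl, hsum⟩
    obtain rfl : Rbar = R - r := by linarith
    exact ⟨⟨⟨hr₀, hrR⟩, (Fnec_eq_zero_iff hc ⟨hr₀.le, hrR.le⟩).1 hF⟩, rfl, rfl⟩
  · rintro ⟨⟨⟨hr₀, hrR⟩, hφ⟩, rfl, rfl⟩
    exact ⟨hr₀, hrR, (Fnec_eq_zero_iff hc ⟨hr₀.le, hrR.le⟩).2 hφ, rfl, by ring⟩

/-- The nonlinear system `F(R̄, β) = 0`, `β = √n_c tanh(√λ r)`, `r + R̄ = R` has a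
solution with `0 < r < R` if and only if `R > R₁`; moreover, for `R > R₁` the solution
is unique. -/
theorem stmt_8 (lam cbar cB alpha n_c R R₁ : ℝ) (hlam : 0 < lam) (hcbar : 0 < cbar)
    (hc : cbar < cB) (halpha : alpha ∈ Set.Ioo (0 : ℝ) 1) (hn_c : n_c ∈ Set.Ioo (0 : ℝ) 1)
    (hR : 0 < R) (hR₁pos : 0 < R₁)
    (hR₁ : Real.cosh (Real.sqrt lam * (1 - alpha) * R₁) / Real.cosh (Real.sqrt lam * R₁)
      = cbar / cB) :
    ((∃ r Rbar beta : ℝ, 0 < r ∧ r < R ∧ Fnec lam cbar cB alpha Rbar beta = 0 ∧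
        beta = Real.sqrt n_c * Real.tanh (Real.sqrt lam * r) ∧ r + Rbar = R) ↔ R₁ < R) ∧
    (R₁ < R → ∀ r Rbar beta r' Rbar' beta' : ℝ,
      (0 < r ∧ r < R ∧ Fnec lam cbar cB alpha Rbar beta = 0 ∧
        beta = Real.sqrt n_c * Real.tanh (Real.sqrt lam * r) ∧ r + Rbar = R) →
      (0 < r' ∧ r' < R ∧ Fnec lam cbar cB alpha Rbar' beta' = 0 ∧
        beta' = Real.sqrt n_c * Real.tanh (Real.sqrt lam * r') ∧ r' + Rbar' = R) →
      r = r' ∧ Rbar = Rbar' ∧ beta = beta') := by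
  simp only [Fnec_system_iff (sqrt_nonneg n_c), exists_and_left, exists_eq, and_true]
  obtain ⟨hα₀, hα₁⟩ := halpha
  set s := √lam
  set m := s * (1 - alpha)
  set φ := rimProfile s m √n_c R / rimProfile s s √n_c R
  have hs : 0 < s := sqrt_pos.2 hlam
  have hm : 0 < m := mul_pos hs (sub_pos.2 hα₁)
  have hms : m < s := mul_lt_of_lt_one_right hs (by linarith)
  have hmono : StrictMonoOn φ (Icc 0 R) :=
    strictMonoOn_rimProfile_div hm hms (sqrt_nonneg _) (sqrt_le_one.2 hn_c.2.le)
  refine ⟨?_, ?_⟩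
  · have hφ₀ : φ 0 = cosh (m * R) / cosh (s * R) := by
      simp only [φ, Pi.div_apply, rimProfile_zero]
    have hφR : φ R = 1 := by simp only [φ, Pi.div_apply, rimProfile_self, div_one]
    have hq : cbar / cB < 1 := (div_lt_one (hcbar.trans hc)).2 hc
    rw [hmono.exists_mem_Ioo_eq_iff (continuousOn_rimProfile_div hs.le (sqrt_nonneg _)) hR.le,
      hφ₀, hφR, mem_Ioo, and_iff_left hq, ← hR₁]
    exact (strictAntiOn_cosh_mul_div_cosh_mul_s8 hm.le hms).lt_iff_gt hR.le hR₁pos.le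
  · rintro - r Rbar beta r' Rbar' beta' ⟨⟨hr, hφr⟩, rfl, rfl⟩ ⟨⟨hr', hφr'⟩, rfl, rfl⟩
    obtain rfl : r = r' :=
      hmono.injOn (Ioo_subset_Icc_self hr) (Ioo_subset_Icc_self hr') (hφr.trans hφr'.symm)
    exact ⟨rfl, rfl, rfl⟩
end

section
/- Let λ > 0, n_c ∈ (0,1), R > 0, c_B > 0, and 0 < r₂ < r₁ < R. For i = 1, 2 define ψ_i(x) = λ·n_c for |x| < r_i and ψ_i(x) = λ for r_i ≤ |x| ≤ R. Suppose c_i : [−R, R] → ℝ is continuous, continuously differentiable on (−R, R), twice differentiable on (−R, R)∖{−r_i, r_i} with c_i''(x) = ψ_i(x)·c_i(x) there, and c_i(±R) = c_B. Then c₁(x) ≥ c₂(x) for all x ∈ [−R, R]. -/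
/-- The nutrient profile with necrotic core radius `r` on the fixed domain `(-R, R)`:
`c` is continuous on `[-R,R]`, `C¹` on `(-R,R)`, twice differentiable away from `|x| = r`
with `c'' = ψ c` where `ψ(x) = λ n_c` for `|x| < r` and `ψ(x) = λ` for `r ≤ |x| ≤ R`,
and `c(±R) = c_B`. -/
def NutrientProfile (R lam n_c cB r : ℝ) (c : ℝ → ℝ) : Prop :=
  ContinuousOn c (Set.Icc (-R) R) ∧
  (∀ x ∈ Set.Ioo (-R) R, DifferentiableAt ℝ c x) ∧
  ContinuousOn (deriv c) (Set.Ioo (-R) R) ∧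
  (∀ x ∈ Set.Ioo (-R) R, |x| ≠ r →
    HasDerivAt (deriv c) ((if |x| < r then lam * n_c else lam) * c x) x) ∧
  c (-R) = cB ∧ c R = cB

/-!
Both profiles obey a minimum principle: if `f'' < 0` wherever `f < 0` (off finitely many
points) and `f ≥ 0` at the ends of an interval, then `f ≥ 0`, since at a negative interior minimum
`f' = 0` and just to its right `f'` and hence `f` strictly decrease. Applied to `c₂` it gives
`c₂ ≥ 0`. Applied to `w = c₁ - c₂` it gives the claim: where `c₁ < c₂`, the consumption
coefficients satisfy `0 < ψ₁ ≤ ψ₂`, so `w'' = ψ₁ c₁ - ψ₂ c₂ < ψ₁ c₂ - ψ₂ c₂ ≤ 0`.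
-/

open Set Filter Topology

theorem nonneg_of_deriv_deriv_neg_of_neg {f : ℝ → ℝ} {a b : ℝ} {E : Set ℝ} (hE : E.Finite)
    (hf : ContinuousOn f (Icc a b)) (hf' : ContinuousOn (deriv f) (Ioo a b))
    (hf'' : ∀ x ∈ Ioo a b, x ∉ E → f x < 0 → deriv (deriv f) x < 0)
    (ha : 0 ≤ f a) (hb : 0 ≤ f b) : ∀ x ∈ Icc a b, 0 ≤ f x := by
  intro z hz
  by_contra! hfz
  obtain ⟨x₀, hx₀, hmin⟩ := isCompact_Icc.exists_isMinOn ⟨z, hz⟩ hf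
  have hfx₀ : f x₀ < 0 := (hmin hz).trans_lt hfz
  have hx₀ab : x₀ ∈ Ioo a b :=
    ⟨hx₀.1.lt_of_ne (by rintro rfl; linarith), hx₀.2.lt_of_ne (by rintro rfl; linarith)⟩
  have hIcc : Icc a b ∈ 𝓝 x₀ := Icc_mem_nhds hx₀ab.1 hx₀ab.2
  have hcrit : deriv f x₀ = 0 := (hmin.isLocalMin hIcc).deriv_eq_zero
  have hright : ∀ᶠ x in 𝓝[>] x₀, (x ∈ Ioo a b ∧ f x < 0) ∧ x ∉ E := by
    refine (((isOpen_Ioo.eventually_mem hx₀ab).and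
      ((hf.continuousAt hIcc).eventually_lt continuousAt_const hfx₀)).filter_mono
      nhdsWithin_le_nhds).and ?_
    have hE' : univ \ E ∈ 𝓝[>] x₀ := nhdsWithin_mono _ (fun _ hx => ne_of_gt hx)
      (nhdsNE_of_nhdsNE_sdiff_finite univ_mem hE)
    filter_upwards [hE'] with x hx using hx.2
  obtain ⟨u, hu, hIoo⟩ := mem_nhdsGT_iff_exists_Ioo_subset.1 hright
  obtain ⟨y, hx₀y, hyu⟩ := exists_between (α := ℝ) hu
  have hconcave : ∀ x ∈ Ioc x₀ y, (x ∈ Ioo a b ∧ f x < 0) ∧ x ∉ E :=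
    fun x hx => hIoo ⟨hx.1, hx.2.trans_lt hyu⟩
  have hsub : Icc x₀ y ⊆ Ioo a b :=
    ordConnected_Ioo.out hx₀ab (hconcave y ⟨hx₀y, le_rfl⟩).1.1
  have hf'_anti : StrictAntiOn (deriv f) (Icc x₀ y) := by
    refine strictAntiOn_of_deriv_neg (convex_Icc _ _) (hf'.mono hsub) fun x hx => ?_
    rw [interior_Icc] at hx
    obtain ⟨⟨hxab, hfx⟩, hxE⟩ := hconcave x (Ioo_subset_Ioc_self hx)
    exact hf'' x hxab hxE hfx
  have hf_anti : StrictAntiOn f (Icc x₀ y) := by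
    refine strictAntiOn_of_deriv_neg (convex_Icc _ _) (hf.mono (hsub.trans Ioo_subset_Icc_self))
      fun x hx => ?_
    rw [interior_Icc] at hx
    rw [← hcrit]
    exact hf'_anti (left_mem_Icc.2 hx₀y.le) (Ioo_subset_Icc_self hx) hx.1
  exact (hf_anti (left_mem_Icc.2 hx₀y.le) (right_mem_Icc.2 hx₀y.le) hx₀y).not_ge
    (hmin (Ioo_subset_Icc_self (hsub (right_mem_Icc.2 hx₀y.le))))

theorem finite_setOf_abs_eq (r : ℝ) : {x : ℝ | |x| = r}.Finite :=
  (toFinite {r, -r}).subset fun _ hx => eq_or_eq_neg_of_abs_eq hx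

/-- The consumption coefficient `ψ` of a profile whose necrotic core has radius `r`. -/
noncomputable def necroticUptake (lam n_c r x : ℝ) : ℝ := if |x| < r then lam * n_c else lam

section necroticUptake

variable {lam n_c x : ℝ}

theorem necroticUptake_pos (hlam : 0 < lam) (hn_c : 0 < n_c) (r : ℝ) :
    0 < necroticUptake lam n_c r x := by
  unfold necroticUptake
  split_ifs <;> positivity

theorem necroticUptake_antitone (hlam : 0 ≤ lam) (hn_c : n_c ≤ 1) :
    Antitone fun r => necroticUptake lam n_c r x := by
  intro r r' hr
  simp only [necroticUptake]
  split_ifs with h' h h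
  · exact le_rfl
  · exact mul_le_of_le_one_right hlam hn_c
  · exact absurd (h.trans_le hr) h'
  · exact le_rfl

end necroticUptake

namespace NutrientProfile

variable {R lam n_c cB r r₁ r₂ x : ℝ} {c c₁ c₂ : ℝ → ℝ}

theorem hasDerivAt_deriv (h : NutrientProfile R lam n_c cB r c) (hx : x ∈ Ioo (-R) R)
    (hxr : |x| ≠ r) : HasDerivAt (deriv c) (necroticUptake lam n_c r x * c x) x :=
  h.2.2.2.1 x hx hxr

theorem nonneg (h : NutrientProfile R lam n_c cB r c) (hlam : 0 < lam) (hn_c : 0 < n_c)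
    (hcB : 0 ≤ cB) : ∀ x ∈ Icc (-R) R, 0 ≤ c x := by
  refine nonneg_of_deriv_deriv_neg_of_neg (finite_setOf_abs_eq r) h.1 h.2.2.1
    (fun x hx hxr hcx => ?_) (h.2.2.2.2.1 ▸ hcB) (h.2.2.2.2.2 ▸ hcB)
  rw [(h.hasDerivAt_deriv hx hxr).deriv]
  exact mul_neg_of_pos_of_neg (necroticUptake_pos hlam hn_c r) hcx

theorem deriv_sub_eqOn (h₁ : NutrientProfile R lam n_c cB r₁ c₁)
    (h₂ : NutrientProfile R lam n_c cB r₂ c₂) :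
    EqOn (deriv (c₁ - c₂)) (deriv c₁ - deriv c₂) (Ioo (-R) R) :=
  fun x hx => deriv_sub (h₁.2.1 x hx) (h₂.2.1 x hx)

theorem deriv_deriv_sub (h₁ : NutrientProfile R lam n_c cB r₁ c₁)
    (h₂ : NutrientProfile R lam n_c cB r₂ c₂) (hx : x ∈ Ioo (-R) R) (hx₁ : |x| ≠ r₁)
    (hx₂ : |x| ≠ r₂) :
    deriv (deriv (c₁ - c₂)) x =
      necroticUptake lam n_c r₁ x * c₁ x - necroticUptake lam n_c r₂ x * c₂ x := by
  rw [((h₁.deriv_sub_eqOn h₂).eventuallyEq_of_mem (isOpen_Ioo.mem_nhds hx)).deriv_eq]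
  exact ((h₁.hasDerivAt_deriv hx hx₁).sub (h₂.hasDerivAt_deriv hx hx₂)).deriv

end NutrientProfile

theorem stmt_14_general (lam n_c R cB r₁ r₂ : ℝ)
    (hlam : 0 < lam) (hn_c : n_c ∈ Set.Ioo (0 : ℝ) 1) (hcB : 0 < cB)
    (hr : r₂ < r₁)
    (c₁ c₂ : ℝ → ℝ)
    (h₁ : NutrientProfile R lam n_c cB r₁ c₁)
    (h₂ : NutrientProfile R lam n_c cB r₂ c₂) :
    ∀ x ∈ Set.Icc (-R) R, c₂ x ≤ c₁ x := by
  have hc₂ := h₂.nonneg hlam hn_c.1 hcB.le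
  have hE : {x : ℝ | |x| = r₁ ∨ |x| = r₂}.Finite :=
    (finite_setOf_abs_eq r₁).union (finite_setOf_abs_eq r₂)
  have hw : ∀ x ∈ Icc (-R) R, 0 ≤ (c₁ - c₂) x := by
    refine nonneg_of_deriv_deriv_neg_of_neg hE (h₁.1.sub h₂.1)
      ((h₁.2.2.1.sub h₂.2.2.1).congr (h₁.deriv_sub_eqOn h₂)) (fun x hx hxE hw => ?_) ?_ ?_
    · obtain ⟨hx₁, hx₂⟩ : |x| ≠ r₁ ∧ |x| ≠ r₂ := not_or.1 hxE
      calc deriv (deriv (c₁ - c₂)) x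
          = necroticUptake lam n_c r₁ x * c₁ x - necroticUptake lam n_c r₂ x * c₂ x :=
            h₁.deriv_deriv_sub h₂ hx hx₁ hx₂
        _ < necroticUptake lam n_c r₁ x * c₂ x - necroticUptake lam n_c r₂ x * c₂ x :=
            sub_lt_sub_right (mul_lt_mul_of_pos_left (sub_neg.1 hw)
              (necroticUptake_pos hlam hn_c.1 r₁)) _
        _ ≤ 0 := sub_nonpos.2 (mul_le_mul_of_nonneg_right
            (necroticUptake_antitone hlam.le hn_c.2.le hr.le) (hc₂ x (Ioo_subset_Icc_self hx)))
    all_goals simp [h₁.2.2.2.2.1, h₁.2.2.2.2.2, h₂.2.2.2.2.1, h₂.2.2.2.2.2]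
  exact fun x hx => sub_nonneg.1 (hw x hx)

/-- Nutrient comparison: a solution with a larger necrotic core (`r₁ > r₂`) consumes less
nutrient, hence its nutrient profile dominates pointwise on `[-R, R]`. -/
theorem stmt_14 (lam n_c R cB r₁ r₂ : ℝ)
    (hlam : 0 < lam) (hn_c : n_c ∈ Set.Ioo (0 : ℝ) 1) (hR : 0 < R) (hcB : 0 < cB)
    (hr₂ : 0 < r₂) (hr : r₂ < r₁) (hr₁ : r₁ < R)
    (c₁ c₂ : ℝ → ℝ)
    (h₁ : NutrientProfile R lam n_c cB r₁ c₁)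
    (h₂ : NutrientProfile R lam n_c cB r₂ c₂) :
    ∀ x ∈ Set.Icc (-R) R, c₂ x ≤ c₁ x :=
  stmt_14_general lam n_c R cB r₁ r₂ hlam hn_c hcB hr c₁ c₂ h₁ h₂
end
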